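/- (Secular equation for the quantum graph walk) Let (L, λ, A) be quantum-graph parameters and k a nonzero real, and suppose e^{2ikL_e} ≠ 1 for every edge e ∈ E. Then there exists a nonzero a ∈ ℂ^{D(G)} with U^{(L,λ,A)}(k)·a = a if and only if det(I_{|V|} − T + 𝒟) = 0, where T is the |V|×|V| matrix with T_{i,j} = e^{iL_{{i,j}}(k + A_{(i,j)})}·(1 + e^{−iρ_j(k)}) / (√(d_i d_j)·(1 − e^{2ikL_{{i,j}}})) for (i,j) ∈ D(G) and 0 otherwise, 𝒟 is the diagonal |V|×|V| matrix with 𝒟_{j,j} = (1 + e^{−iρ_j(k)})·Σ_{l∈N(j)} e^{2ikL_{{j,l}}}/(d_j·(1 − e^{2ikL_{{j,l}}})), and e^{iρ_j(k)} = (1 + iλ_j/(k d_j))/(1 − iλ_j/(k d_j)). -/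

import Mathlib

open Matrix Complex BigOperators

section QWFramework

variable {V : Type*}

instance arcDecPred (G : SimpleGraph V) [DecidableRel G.Adj] :
    DecidablePred fun p : V × V => G.Adj p.1 p.2 :=
  fun p => inferInstanceAs (Decidable (G.Adj p.1 p.2))

instance nbrDecPred (G : SimpleGraph V) [DecidableRel G.Adj] (u : V) :
    DecidablePred (G.Adj u) :=
  fun w => inferInstanceAs (Decidable (G.Adj u w))

/-- The symmetric arc set `D(G)` of a graph: ordered pairs of adjacent vertices. -/
abbrev Arc (G : SimpleGraph V) : Type _ := {p : V × V // G.Adj p.1 p.2}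

variable [Fintype V] [DecidableEq V]

/-- The shift (permutation) operator `S_σ` of a shift family `σ`, acting on `ℂ^{D(G)}`
by `S_σ |i,j⟩ = |j, σ_j(i)⟩`. -/
noncomputable def shiftOp (G : SimpleGraph V) [DecidableRel G.Adj]
    (σ : ∀ u : V, Equiv.Perm {w : V // G.Adj u w}) :
    Matrix (Arc G) (Arc G) ℂ :=
  fun a b => if a.1.1 = b.1.2 ∧ a.1.2 = (σ b.1.2 ⟨b.1.1, b.2.symm⟩).1 then 1 else 0

/-- The flip-flop shift family: the identity permutation at every vertex. -/
def ffFam (G : SimpleGraph V) : ∀ u : V, Equiv.Perm {w : V // G.Adj u w} :=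
  fun _ => Equiv.refl _

/-- The flip-flop shift operator `S`, with `S|i,j⟩ = |j,i⟩`. -/
noncomputable def ffShift (G : SimpleGraph V) [DecidableRel G.Adj] : Matrix (Arc G) (Arc G) ℂ :=
  shiftOp G (ffFam G)

/-- The block-diagonal coin operator `C = ⊕_u H_u`, acting by
`C|i,j⟩ = Σ_{k∈N(i)} (H_i)_{k,j} |i,k⟩`. -/
noncomputable def coinOp (G : SimpleGraph V) [DecidableRel G.Adj]
    (H : ∀ u : V, Matrix {w : V // G.Adj u w} {w : V // G.Adj u w} ℂ) :
    Matrix (Arc G) (Arc G) ℂ :=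
  fun a b => if h : a.1.1 = b.1.1 then H b.1.1 ⟨a.1.2, by rw [← h]; exact a.2⟩ ⟨b.1.2, b.2⟩ else 0

/-- The G-type (Gudder type) coined quantum walk `U^G_σ[H] = C·S_σ`. -/
noncomputable def gWalk (G : SimpleGraph V) [DecidableRel G.Adj]
    (σ : ∀ u : V, Equiv.Perm {w : V // G.Adj u w})
    (H : ∀ u : V, Matrix {w : V // G.Adj u w} {w : V // G.Adj u w} ℂ) :
    Matrix (Arc G) (Arc G) ℂ :=
  coinOp G H * shiftOp G σ

/-- The A-type (Ambainis type) coined quantum walk `U^A_σ[H] = S_σ·C`. -/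
noncomputable def aWalk (G : SimpleGraph V) [DecidableRel G.Adj]
    (σ : ∀ u : V, Equiv.Perm {w : V // G.Adj u w})
    (H : ∀ u : V, Matrix {w : V // G.Adj u w} {w : V // G.Adj u w} ℂ) :
    Matrix (Arc G) (Arc G) ℂ :=
  shiftOp G σ * coinOp G H

end QWFramework

/-- The arc value of an edge potential: `A_{(i,j)} = sgn(j−i)·A_{{i,j}}`. -/
def arcPot {V : Type*} [LinearOrder V] (Ae : V → V → ℝ) (i j : V) : ℝ :=
  if i < j then Ae i j else -(Ae i j)

/-- The local coin `H_j(k)` of the quantum graph walk at vertex `j`: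
`(H_j(k))_{m,l} = (2/(d_j + iλ_j/k) − δ_{l,m})·e^{iL_{{j,m}}(k − A_{(j,m)})}`. -/
noncomputable def qgCoin {V : Type*} [Fintype V] [LinearOrder V]
    (G : SimpleGraph V) [DecidableRel G.Adj]
    (L : V → V → ℝ) (lam : V → ℝ) (Ae : V → V → ℝ) (k : ℝ) (j : V) :
    Matrix {w : V // G.Adj j w} {w : V // G.Adj j w} ℂ :=
  fun m l =>
    (2 / ((G.degree j : ℂ) + Complex.I * (lam j : ℂ) / (k : ℂ)) - if l = m then 1 else 0) *
      Complex.exp (Complex.I * (L j m.1 : ℂ) * ((k : ℂ) - (arcPot Ae j m.1 : ℂ)))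

/-- The quantum graph walk `U^{(L,λ,A)}(k) = S·C(k)`: the A-type walk with flip-flop shift
and coins `H_j(k)`. -/
noncomputable def qgWalk {V : Type*} [Fintype V] [LinearOrder V]
    (G : SimpleGraph V) [DecidableRel G.Adj]
    (L : V → V → ℝ) (lam : V → ℝ) (Ae : V → V → ℝ) (k : ℝ) :
    Matrix (Arc G) (Arc G) ℂ :=
  ffShift G * coinOp G (qgCoin G L lam Ae k)

/-- `e^{−iρ_j(k)}`, where `e^{iρ_j(k)} = (1 + iλ_j/(k d_j))/(1 − iλ_j/(k d_j))`. -/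
noncomputable def expNegRho {V : Type*} [Fintype V] [DecidableEq V]
    (G : SimpleGraph V) [DecidableRel G.Adj] (lam : V → ℝ) (k : ℝ) (j : V) : ℂ :=
  (1 - Complex.I * (lam j : ℂ) / ((k : ℂ) * (G.degree j : ℂ))) /
    (1 + Complex.I * (lam j : ℂ) / ((k : ℂ) * (G.degree j : ℂ)))

/-! A fixed vector `a` of `S·C(k)` is determined by its vertex sums `s_j = ∑_{l ∈ N(j)} a(j,l)`:
the fixed-point equations of the two arcs `(i,j)` and `(j,i)` of an edge combine to
`a(i,j) (1 - e^{2ikL_{ij}}) = e^{iL_{ij}(k + A_{(i,j)})} c_j s_j - e^{2ikL_{ij}} c_i s_i`, with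
`c_j = 2/(d_j + iλ_j/k)`, and conversely these amplitudes form a fixed vector as soon as their
vertex sums are `s` again. That consistency condition is a linear system `(1 - R) s = 0`, and
conjugating `1 - R` by `diag(√d_j)` gives `I - T + 𝒟`, since `1 + e^{-iρ_j(k)} = d_j c_j`. -/

section PhaseWalk

variable {V : Type*} {G : SimpleGraph V}

/-- The amplitude on the arc `(i, j)` forced, on a fixed vector with vertex sums `s`, by the
fixed-point equations of the arcs `(i, j)` and `(j, i)`; `Q j i * Q i j` is the round-trip
phase of the edge. -/
noncomputable def edgeAmp (G : SimpleGraph V) (c : V → ℂ) (Q : V → V → ℂ) (s : V → ℂ)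
    (x : Arc G) : ℂ :=
  (Q x.1.2 x.1.1 * c x.1.2 * s x.1.2 - Q x.1.2 x.1.1 * Q x.1.1 x.1.2 * c x.1.1 * s x.1.1) /
    (1 - Q x.1.2 x.1.1 * Q x.1.1 x.1.2)

section EdgeEquations

variable {c : V → ℂ} {Q : V → V → ℂ}

theorem eq_edgeAmp (hQ : ∀ i j, G.Adj i j → Q j i * Q i j ≠ 1) {a : Arc G → ℂ} {s : V → ℂ}
    (ha : ∀ i j (h : G.Adj i j), a ⟨(i, j), h⟩ = Q j i * (c j * s j - a ⟨(j, i), h.symm⟩)) :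
    a = edgeAmp G c Q s := by
  funext ⟨⟨i, j⟩, h⟩
  rw [edgeAmp, eq_div_iff (sub_ne_zero.2 (hQ i j h).symm)]
  linear_combination ha i j h - Q j i * ha j i h.symm

theorem edgeAmp_apply_eq (hQ : ∀ i j, G.Adj i j → Q j i * Q i j ≠ 1) (s : V → ℂ) {i j : V}
    (h : G.Adj i j) :
    edgeAmp G c Q s ⟨(i, j), h⟩ = Q j i * (c j * s j - edgeAmp G c Q s ⟨(j, i), h.symm⟩) := by
  have hne : 1 - Q j i * Q i j ≠ 0 := sub_ne_zero.2 (hQ i j h).symm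
  have hne' : 1 - Q i j * Q j i ≠ 0 := by rwa [mul_comm]
  simp only [edgeAmp]
  field_simp
  ring

theorem edgeAmp_zero : edgeAmp G c Q 0 = 0 := by
  funext x
  simp [edgeAmp]

end EdgeEquations

variable [Fintype V] [DecidableRel G.Adj]

theorem sum_arc {M : Type*} [AddCommMonoid M] (f : Arc G → M) :
    ∑ x, f x = ∑ j, ∑ l : {w // G.Adj j w}, f ⟨(j, l.1), l.2⟩ := by
  let e : (Σ j : V, {w // G.Adj j w}) ≃ Arc G :=
    { toFun := fun s => ⟨(s.1, s.2.1), s.2.2⟩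
      invFun := fun a => ⟨a.1.1, a.1.2, a.2⟩
      left_inv := fun _ => rfl
      right_inv := fun _ => rfl }
  rw [← e.sum_comp, ← Finset.univ_sigma_univ, Finset.sum_sigma]
  rfl

theorem sum_ite_adj {M : Type*} [AddCommMonoid M] (i : V) (f : V → M) :
    ∑ j, (if G.Adj i j then f j else 0) = ∑ l : {w // G.Adj i w}, f l := by
  rw [← Finset.sum_filter]
  exact Finset.sum_subtype _ (by simp) f

def vertexSum (G : SimpleGraph V) [DecidableRel G.Adj] (a : Arc G → ℂ) (j : V) : ℂ :=
  ∑ l : {w // G.Adj j w}, a ⟨(j, l.1), l.2⟩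

/-- `√d_i`, except at isolated vertices, where the secular matrix has trivial rows and columns and
any nonzero value will do. -/
noncomputable def degScale (G : SimpleGraph V) [DecidableRel G.Adj] (i : V) : ℂ :=
  (Real.sqrt (max (G.degree i : ℝ) 1) : ℂ)

theorem degScale_ne_zero (i : V) : degScale G i ≠ 0 := by
  rw [degScale, ofReal_ne_zero, Real.sqrt_ne_zero']
  positivity

theorem degScale_of_adj {i j : V} (h : G.Adj i j) :
    degScale G i = (Real.sqrt (G.degree i) : ℂ) := by
  have : (1 : ℝ) ≤ G.degree i := by exact_mod_cast (G.degree_pos_iff_exists_adj i).2 ⟨j, h⟩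
  rw [degScale, max_eq_left this]

variable [DecidableEq V]

theorem ffShift_mulVec_apply (a : Arc G → ℂ) (x : Arc G) :
    (ffShift G *ᵥ a) x = a ⟨(x.1.2, x.1.1), x.2.symm⟩ := by
  have hswap : ∀ z : Arc G,
      (x.1.1 = z.1.2 ∧ x.1.2 = z.1.1) ↔ z = ⟨(x.1.2, x.1.1), x.2.symm⟩ := by
    rintro ⟨⟨u, v⟩, huv⟩
    simp only [Subtype.ext_iff, Prod.ext_iff]
    exact ⟨fun ⟨h1, h2⟩ => ⟨h2.symm, h1.symm⟩, fun ⟨h1, h2⟩ => ⟨h2.symm, h1.symm⟩⟩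
  simp [ffShift, shiftOp, ffFam, mulVec, dotProduct, hswap]

theorem coinOp_mulVec_apply (H : ∀ u : V, Matrix {w // G.Adj u w} {w // G.Adj u w} ℂ)
    (a : Arc G → ℂ) (x : Arc G) :
    (coinOp G H *ᵥ a) x =
      ∑ l : {w // G.Adj x.1.1 w}, H x.1.1 ⟨x.1.2, x.2⟩ l * a ⟨(x.1.1, l.1), l.2⟩ := by
  simp only [mulVec, dotProduct]
  rw [sum_arc, Finset.sum_eq_single x.1.1]
  · simp [coinOp]
  · intro j _ hj
    exact Finset.sum_eq_zero fun l _ => by simp [coinOp, Ne.symm hj]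
  · simp

def phaseCoin (G : SimpleGraph V) [DecidableRel G.Adj] (c : V → ℂ) (Q : V → V → ℂ) (j : V) :
    Matrix {w // G.Adj j w} {w // G.Adj j w} ℂ :=
  fun m l => (c j - if l = m then 1 else 0) * Q j m

noncomputable def phaseWalk (G : SimpleGraph V) [DecidableRel G.Adj] (c : V → ℂ)
    (Q : V → V → ℂ) : Matrix (Arc G) (Arc G) ℂ :=
  ffShift G * coinOp G (phaseCoin G c Q)

theorem phaseWalk_mulVec_apply (c : V → ℂ) (Q : V → V → ℂ) (a : Arc G → ℂ) {i j : V}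
    (h : G.Adj i j) :
    (phaseWalk G c Q *ᵥ a) ⟨(i, j), h⟩
      = Q j i * (c j * vertexSum G a j - a ⟨(j, i), h.symm⟩) := by
  rw [phaseWalk, ← mulVec_mulVec, ffShift_mulVec_apply, coinOp_mulVec_apply]
  simp only [phaseCoin, vertexSum, sub_mul, Finset.sum_sub_distrib, ite_mul, one_mul, zero_mul,
    Finset.sum_ite_eq', Finset.mem_univ, if_true, mul_sub, Finset.mul_sum]
  exact congrArg₂ _ (Finset.sum_congr rfl fun _ _ => by ring) rfl

theorem exists_fixed_iff_exists_vertexSum_edgeAmp {c : V → ℂ} {Q : V → V → ℂ}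
    (hQ : ∀ i j, G.Adj i j → Q j i * Q i j ≠ 1) :
    (∃ a ≠ 0, phaseWalk G c Q *ᵥ a = a) ↔
      ∃ s ≠ 0, vertexSum G (edgeAmp G c Q s) = s := by
  constructor
  · rintro ⟨a, ha0, hfix⟩
    have ha : a = edgeAmp G c Q (vertexSum G a) := eq_edgeAmp hQ fun i j h => by
      rw [← phaseWalk_mulVec_apply c Q a h, hfix]
    refine ⟨vertexSum G a, fun hs => ha0 ?_, ha ▸ rfl⟩
    rw [ha, hs, edgeAmp_zero]
  · rintro ⟨s, hs0, hs⟩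
    refine ⟨edgeAmp G c Q s, fun ha => hs0 ?_, ?_⟩
    · rw [← hs, ha]
      funext j
      simp [vertexSum]
    · funext ⟨⟨i, j⟩, h⟩
      rw [phaseWalk_mulVec_apply, hs, ← edgeAmp_apply_eq hQ]

noncomputable def reducedMatrix (G : SimpleGraph V) [DecidableRel G.Adj] (c : V → ℂ)
    (Q : V → V → ℂ) : Matrix V V ℂ :=
  of (fun i j => if G.Adj i j then Q j i * c j / (1 - Q j i * Q i j) else 0) -
    diagonal fun i => c i * ∑ l : {w // G.Adj i w}, Q l i * Q i l / (1 - Q l i * Q i l)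

theorem vertexSum_edgeAmp (c : V → ℂ) (Q : V → V → ℂ) (s : V → ℂ) :
    vertexSum G (edgeAmp G c Q s) = reducedMatrix G c Q *ᵥ s := by
  funext i
  simp only [vertexSum, edgeAmp, reducedMatrix, sub_mulVec, Pi.sub_apply, mulVec_diagonal]
  simp only [mulVec, dotProduct, of_apply, ite_mul, zero_mul, sum_ite_adj, sub_div,
    Finset.sum_sub_distrib, Finset.mul_sum, Finset.sum_mul]
  congr 1 <;> exact Finset.sum_congr rfl fun l _ => by ring

theorem exists_fixed_iff_det_eq_zero {c : V → ℂ} {Q : V → V → ℂ}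
    (hQ : ∀ i j, G.Adj i j → Q j i * Q i j ≠ 1) :
    (∃ a ≠ 0, phaseWalk G c Q *ᵥ a = a) ↔
      det (1 - reducedMatrix G c Q) = 0 := by
  rw [exists_fixed_iff_exists_vertexSum_edgeAmp hQ, ← exists_mulVec_eq_zero_iff]
  simp only [sub_mulVec, one_mulVec, vertexSum_edgeAmp, sub_eq_zero, eq_comm]

end PhaseWalk

section QuantumGraphPhase

variable {V : Type*} [LinearOrder V]

theorem arcPot_swap {Ae : V → V → ℝ} (hAs : ∀ i j, Ae i j = Ae j i) {i j : V} (hij : i ≠ j) :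
    arcPot Ae j i = -arcPot Ae i j := by
  unfold arcPot
  rcases hij.lt_or_gt with h | h
  · rw [if_pos h, if_neg h.not_gt, hAs]
  · rw [if_pos h, if_neg h.not_gt, hAs, neg_neg]

noncomputable def qgPhase (L : V → V → ℝ) (Ae : V → V → ℝ) (k : ℝ) (j m : V) : ℂ :=
  exp (I * (L j m : ℂ) * ((k : ℂ) - (arcPot Ae j m : ℂ)))

variable {L Ae : V → V → ℝ}

theorem qgPhase_swap (hLs : ∀ i j, L i j = L j i) (hAs : ∀ i j, Ae i j = Ae j i) (k : ℝ)
    {i j : V} (hij : i ≠ j) :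
    qgPhase L Ae k j i = exp (I * (L i j : ℂ) * ((k : ℂ) + (arcPot Ae i j : ℂ))) := by
  rw [qgPhase, hLs, arcPot_swap hAs hij, ofReal_neg, sub_neg_eq_add]

theorem qgPhase_mul_qgPhase (hLs : ∀ i j, L i j = L j i) (hAs : ∀ i j, Ae i j = Ae j i)
    (k : ℝ) {i j : V} (hij : i ≠ j) :
    qgPhase L Ae k j i * qgPhase L Ae k i j = exp (2 * I * (k : ℂ) * (L i j : ℂ)) := by
  rw [qgPhase_swap hLs hAs k hij, qgPhase, ← exp_add]
  ring_nf

end QuantumGraphPhase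

section QuantumGraphWalk

variable {V : Type*} [Fintype V] [LinearOrder V] {G : SimpleGraph V} [DecidableRel G.Adj]

noncomputable def qgWeight (G : SimpleGraph V) [DecidableRel G.Adj] (lam : V → ℝ) (k : ℝ)
    (j : V) : ℂ :=
  2 / ((G.degree j : ℂ) + I * (lam j : ℂ) / (k : ℂ))

theorem qgWalk_eq_phaseWalk (L : V → V → ℝ) (lam : V → ℝ) (Ae : V → V → ℝ) (k : ℝ) :
    qgWalk G L lam Ae k = phaseWalk G (qgWeight G lam k) (qgPhase L Ae k) :=
  rfl

theorem one_add_expNegRho (lam : V → ℝ) (k : ℝ) {j : V} (hj : G.degree j ≠ 0) :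
    1 + expNegRho G lam k j = G.degree j * qgWeight G lam k j := by
  have hd : (G.degree j : ℂ) ≠ 0 := Nat.cast_ne_zero.2 hj
  have hx : 1 + I * (lam j : ℂ) / ((k : ℂ) * (G.degree j : ℂ)) ≠ 0 := by
    rw [show I * (lam j : ℂ) / ((k : ℂ) * (G.degree j : ℂ)) =
        ((lam j / (k * G.degree j) : ℝ) : ℂ) * I by push_cast; ring]
    intro h
    have hre := congrArg re h
    rw [add_re, one_re, re_ofReal_mul, I_re, mul_zero, add_zero, zero_re] at hre
    exact one_ne_zero hre
  have hden : (G.degree j : ℂ) + I * (lam j : ℂ) / (k : ℂ) ≠ 0 := by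
    convert mul_ne_zero hd hx using 1
    field_simp
  rw [expNegRho, qgWeight]
  field_simp
  ring

/-- The matrix `I - T + 𝒟` of the secular equation. -/
noncomputable def secularMatrix (G : SimpleGraph V) [DecidableRel G.Adj] (L : V → V → ℝ)
    (lam : V → ℝ) (Ae : V → V → ℝ) (k : ℝ) : Matrix V V ℂ :=
  (1 : Matrix V V ℂ) -
    Matrix.of (fun i j : V =>
      if G.Adj i j then
        Complex.exp (Complex.I * (L i j : ℂ) * ((k : ℂ) + (arcPot Ae i j : ℂ))) *
            (1 + expNegRho G lam k j) /
          (((Real.sqrt ((G.degree i : ℝ) * (G.degree j : ℝ)) : ℝ) : ℂ) *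
            (1 - Complex.exp (2 * Complex.I * (k : ℂ) * (L i j : ℂ))))
      else 0) +
    Matrix.of (fun i j : V =>
      if i = j then
        (1 + expNegRho G lam k j) *
          ∑ l : {w : V // G.Adj j w},
            Complex.exp (2 * Complex.I * (k : ℂ) * (L j l.1 : ℂ)) /
              ((G.degree j : ℂ) *
                (1 - Complex.exp (2 * Complex.I * (k : ℂ) * (L j l.1 : ℂ))))
      else 0)

theorem secularMatrix_apply_self (L : V → V → ℝ) (hLs : ∀ i j, L i j = L j i) (lam : V → ℝ)
    {Ae : V → V → ℝ} (hAs : ∀ i j, Ae i j = Ae j i) (k : ℝ) (i : V) :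
    secularMatrix G L lam Ae k i i =
      1 + qgWeight G lam k i * ∑ l : {w // G.Adj i w}, qgPhase L Ae k l i * qgPhase L Ae k i l /
        (1 - qgPhase L Ae k l i * qgPhase L Ae k i l) := by
  simp only [secularMatrix, Matrix.add_apply, Matrix.sub_apply, one_apply_eq, of_apply,
    if_neg (G.loopless.irrefl i), ite_true, sub_zero]
  congr 1
  by_cases hi : G.degree i = 0
  · have : IsEmpty {w // G.Adj i w} :=
      ⟨fun l => ((G.degree_pos_iff_exists_adj i).2 ⟨l, l.2⟩).ne' hi⟩
    simp
  rw [one_add_expNegRho lam k hi, mul_comm (G.degree i : ℂ), mul_assoc, Finset.mul_sum]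
  refine congrArg _ (Finset.sum_congr rfl fun l _ => ?_)
  rw [qgPhase_mul_qgPhase hLs hAs k (G.ne_of_adj l.2)]
  field_simp

theorem secularMatrix_apply_of_adj (L : V → V → ℝ) (hLs : ∀ i j, L i j = L j i) (lam : V → ℝ)
    {Ae : V → V → ℝ} (hAs : ∀ i j, Ae i j = Ae j i) (k : ℝ) {i j : V} (h : G.Adj i j) :
    secularMatrix G L lam Ae k i j =
      -((degScale G i)⁻¹ * (qgPhase L Ae k j i * qgWeight G lam k j /
        (1 - qgPhase L Ae k j i * qgPhase L Ae k i j)) * degScale G j) := by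
  have hj : G.degree j ≠ 0 := ((G.degree_pos_iff_exists_adj j).2 ⟨i, h.symm⟩).ne'
  have hsi : (Real.sqrt (G.degree i) : ℂ) ≠ 0 := by
    rw [← degScale_of_adj h]; exact degScale_ne_zero i
  have hsj : (Real.sqrt (G.degree j) : ℂ) ≠ 0 := by
    rw [← degScale_of_adj h.symm]; exact degScale_ne_zero j
  have hdj : (G.degree j : ℂ) = (Real.sqrt (G.degree j) : ℂ) * (Real.sqrt (G.degree j) : ℂ) := by
    rw [← ofReal_mul, Real.mul_self_sqrt (Nat.cast_nonneg _), ofReal_natCast]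
  simp only [secularMatrix, Matrix.add_apply, Matrix.sub_apply, one_apply_ne (G.ne_of_adj h),
    of_apply, if_pos h, if_neg (G.ne_of_adj h), zero_sub, add_zero]
  rw [qgPhase_mul_qgPhase hLs hAs k (G.ne_of_adj h), qgPhase_swap hLs hAs k (G.ne_of_adj h),
    degScale_of_adj h, degScale_of_adj h.symm, one_add_expNegRho lam k hj, hdj,
    Real.sqrt_mul (Nat.cast_nonneg _), ofReal_mul]
  field_simp

theorem secularMatrix_eq_conj (L : V → V → ℝ) (hLs : ∀ i j, L i j = L j i) (lam : V → ℝ)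
    {Ae : V → V → ℝ} (hAs : ∀ i j, Ae i j = Ae j i) (k : ℝ) :
    secularMatrix G L lam Ae k = diagonal (fun i => (degScale G i)⁻¹) *
      (1 - reducedMatrix G (qgWeight G lam k) (qgPhase L Ae k)) * diagonal (degScale G) := by
  ext i j
  rw [mul_diagonal, diagonal_mul]
  by_cases hij : i = j
  · subst hij
    rw [secularMatrix_apply_self L hLs lam hAs]
    simp [reducedMatrix, inv_mul_eq_div, div_mul_cancel₀ _ (degScale_ne_zero i)]
  by_cases h : G.Adj i j
  · rw [secularMatrix_apply_of_adj L hLs lam hAs k h]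
    simp [reducedMatrix, hij, h]
  · simp [secularMatrix, reducedMatrix, hij, h]

theorem det_secularMatrix (L : V → V → ℝ) (hLs : ∀ i j, L i j = L j i) (lam : V → ℝ)
    {Ae : V → V → ℝ} (hAs : ∀ i j, Ae i j = Ae j i) (k : ℝ) :
    det (secularMatrix G L lam Ae k) =
      det (1 - reducedMatrix G (qgWeight G lam k) (qgPhase L Ae k)) := by
  have hprod : ∏ i, degScale G i ≠ 0 := Finset.prod_ne_zero_iff.2 fun i _ => degScale_ne_zero i
  rw [secularMatrix_eq_conj L hLs lam hAs, det_mul, det_mul, det_diagonal, det_diagonal,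
    Finset.prod_inv_distrib, mul_comm, ← mul_assoc, mul_inv_cancel₀ hprod, one_mul]

end QuantumGraphWalk

theorem qgWalk_secular_equation_general {V : Type*} [Fintype V] [LinearOrder V]
    (G : SimpleGraph V) [DecidableRel G.Adj]
    (L : V → V → ℝ) (hLs : ∀ i j, L i j = L j i)
    (lam : V → ℝ)
    (Ae : V → V → ℝ) (hAs : ∀ i j, Ae i j = Ae j i)
    (k : ℝ)
    (hL1 : ∀ i j : V, G.Adj i j →
      Complex.exp (2 * Complex.I * (k : ℂ) * (L i j : ℂ)) ≠ 1) :
    (∃ a : Arc G → ℂ, a ≠ 0 ∧ (qgWalk G L lam Ae k).mulVec a = a) ↔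
      Matrix.det
        ((1 : Matrix V V ℂ) -
          Matrix.of (fun i j : V =>
            if h : G.Adj i j then
              Complex.exp (Complex.I * (L i j : ℂ) * ((k : ℂ) + (arcPot Ae i j : ℂ))) *
                  (1 + expNegRho G lam k j) /
                (((Real.sqrt ((G.degree i : ℝ) * (G.degree j : ℝ)) : ℝ) : ℂ) *
                  (1 - Complex.exp (2 * Complex.I * (k : ℂ) * (L i j : ℂ))))
            else 0) +
          Matrix.of (fun i j : V =>
            if i = j then
              (1 + expNegRho G lam k j) *
                ∑ l : {w : V // G.Adj j w},
                  Complex.exp (2 * Complex.I * (k : ℂ) * (L j l.1 : ℂ)) /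
                    ((G.degree j : ℂ) *
                      (1 - Complex.exp (2 * Complex.I * (k : ℂ) * (L j l.1 : ℂ))))
            else 0)) = 0 := by
  have hQ : ∀ i j, G.Adj i j → qgPhase L Ae k j i * qgPhase L Ae k i j ≠ 1 := fun i j h => by
    rw [qgPhase_mul_qgPhase hLs hAs k (G.ne_of_adj h)]
    exact hL1 i j h
  rw [qgWalk_eq_phaseWalk, exists_fixed_iff_det_eq_zero hQ, ← det_secularMatrix L hLs lam hAs k]
  rfl

/-- secular equation for the quantum graph walk: assuming `e^{2ikL_e} ≠ 1` on every
edge, the quantum graph walk has a nonzero fixed vector iff `det(I_{|V|} − T + 𝒟) = 0`. -/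
theorem qgWalk_secular_equation {V : Type*} [Fintype V] [LinearOrder V]
    (G : SimpleGraph V) [DecidableRel G.Adj] (hG : G.Connected)
    (L : V → V → ℝ) (hLs : ∀ i j, L i j = L j i) (hLpos : ∀ i j, G.Adj i j → 0 < L i j)
    (lam : V → ℝ) (hlam : ∀ i, 0 ≤ lam i)
    (Ae : V → V → ℝ) (hAs : ∀ i j, Ae i j = Ae j i)
    (k : ℝ) (hk : k ≠ 0)
    (hL1 : ∀ i j : V, G.Adj i j →
      Complex.exp (2 * Complex.I * (k : ℂ) * (L i j : ℂ)) ≠ 1) :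
    (∃ a : Arc G → ℂ, a ≠ 0 ∧ (qgWalk G L lam Ae k).mulVec a = a) ↔
      Matrix.det
        ((1 : Matrix V V ℂ) -
          Matrix.of (fun i j : V =>
            if h : G.Adj i j then
              Complex.exp (Complex.I * (L i j : ℂ) * ((k : ℂ) + (arcPot Ae i j : ℂ))) *
                  (1 + expNegRho G lam k j) /
                (((Real.sqrt ((G.degree i : ℝ) * (G.degree j : ℝ)) : ℝ) : ℂ) *
                  (1 - Complex.exp (2 * Complex.I * (k : ℂ) * (L i j : ℂ))))
            else 0) +
          Matrix.of (fun i j : V =>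
            if i = j then
              (1 + expNegRho G lam k j) *
                ∑ l : {w : V // G.Adj j w},
                  Complex.exp (2 * Complex.I * (k : ℂ) * (L j l.1 : ℂ)) /
                    ((G.degree j : ℂ) *
                      (1 - Complex.exp (2 * Complex.I * (k : ℂ) * (L j l.1 : ℂ))))
            else 0)) = 0 :=
  qgWalk_secular_equation_general G L hLs lam Ae hAs k hL1
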